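/- arXiv:2205.04949 — 2 statements merged into one kernel-verified Lean document; each statement's English description precedes it below -/
import Mathlib

section
/- Let (g,Γ) be a solution of the (1,2)-AlgDOP problem over ℂ with Γ = y·(y − p₁(x))·(y − p₂(x)) for some p₁, p₂ ∈ ℂ[x]. Suppose that for no (1,2)-admissible change of variables Φ and nonzero constant λ the pair (λ·Φ_*g, Γ∘Φ⁻¹) is a solution of the (1,1)-AlgDOP problem over ℂ. Then the polynomial p₁·p₂ has at most two distinct complex roots. -/
open MvPolynomial

noncomputable section

abbrev Poly2 (K : Type*) [CommSemiring K] := MvPolynomial (Fin 2) K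

/-- `P` has `(w₁,w₂)`-weighted degree at most `D`. -/
def WDegLE {K : Type*} [CommSemiring K] (w₁ w₂ : ℝ) (P : Poly2 K) (D : ℝ) : Prop :=
  ∀ m ∈ P.support, w₁ * (m 0 : ℝ) + w₂ * (m 1 : ℝ) ≤ D

/-- `(g,Γ)` with `g = [[a,b],[b,c]]` is a solution of the `(w₁,w₂)`-AlgDOP problem. -/
def IsAlgDOP {K : Type*} [CommRing K] (w₁ w₂ : ℝ) (a b c Γ : Poly2 K) : Prop :=
  WDegLE w₁ w₂ a (2 * w₁) ∧ WDegLE w₁ w₂ b (w₁ + w₂) ∧ WDegLE w₁ w₂ c (2 * w₂) ∧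
  a * c - b ^ 2 ≠ 0 ∧ Squarefree Γ ∧ Γ ∣ (a * c - b ^ 2) ∧
  Γ ∣ (a * pderiv 0 Γ + b * pderiv 1 Γ) ∧
  Γ ∣ (b * pderiv 0 Γ + c * pderiv 1 Γ)

/-- A univariate polynomial regarded as a polynomial in the first variable `x`. -/
def toX {K : Type*} [CommSemiring K] (q : Polynomial K) : Poly2 K :=
  Polynomial.aeval (X 0) q

/-- A univariate polynomial regarded as a polynomial in the second variable `y`. -/
def toY {K : Type*} [CommSemiring K] (q : Polynomial K) : Poly2 K :=
  Polynomial.aeval (X 1) q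

/-- Substitution by the inverse of `Φ(x,y) = (αx+β, γy+p(x))`. -/
def phiInv {K : Type*} [Field K] (α β γ : K) (p : Polynomial K) : Poly2 K →ₐ[K] Poly2 K :=
  MvPolynomial.aeval (fun i : Fin 2 =>
    if i = 0 then C α⁻¹ * (X 0 - C β)
    else C γ⁻¹ * (X 1 - Polynomial.aeval (C α⁻¹ * (X 0 - C β) : Poly2 K) p))

/-- First entry of `Φ_* g`. -/
def pushA {K : Type*} [Field K] (α β γ : K) (p : Polynomial K) (a : Poly2 K) : Poly2 K :=
  phiInv α β γ p (C (α ^ 2) * a)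

/-- Off-diagonal entry of `Φ_* g`. -/
def pushB {K : Type*} [Field K] (α β γ : K) (p : Polynomial K) (a b : Poly2 K) : Poly2 K :=
  phiInv α β γ p (C α * (toX (Polynomial.derivative p) * a + C γ * b))

/-- Last entry of `Φ_* g`. -/
def pushC {K : Type*} [Field K] (α β γ : K) (p : Polynomial K) (a b c : Poly2 K) : Poly2 K :=
  phiInv α β γ p
    ((toX (Polynomial.derivative p)) ^ 2 * a
      + C (2 * γ) * (toX (Polynomial.derivative p) * b) + C (γ ^ 2) * c)


namespace AMTR

open Polynomial in
/-- evaluation `y := p(x)` -/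
def sig (p : Polynomial ℂ) : Poly2 ℂ →ₐ[ℂ] Polynomial ℂ :=
  MvPolynomial.aeval ![Polynomial.X, p]

@[simp] lemma sig_X0 (p : Polynomial ℂ) : sig p (X 0) = Polynomial.X := by
  simp [sig]

@[simp] lemma sig_X1 (p : Polynomial ℂ) : sig p (X 1) = p := by
  simp [sig]

@[simp] lemma sig_toX (p q : Polynomial ℂ) : sig p (toX q) = q := by
  rw [toX, ← Polynomial.aeval_algHom_apply, sig_X0, Polynomial.aeval_X_left_apply]

@[simp] lemma toX_mul (q r : Polynomial ℂ) : toX (q * r) = toX q * toX r := by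
  simp [toX]

@[simp] lemma toX_add (q r : Polynomial ℂ) : toX (q + r) = toX q + toX r := by
  simp [toX]

@[simp] lemma toX_zero : toX (0 : Polynomial ℂ) = 0 := by simp [toX]

lemma pd1_toX (q : Polynomial ℂ) : pderiv 1 (toX q : Poly2 ℂ) = 0 := by
  induction q using Polynomial.induction_on' with
  | add p q hp hq => rw [toX_add, map_add, hp, hq, add_zero]
  | monomial n c =>
    simp [toX, Polynomial.aeval_monomial, pderiv_C_mul, Derivation.leibniz_pow,
      pderiv_X_of_ne (show (1:Fin 2) ≠ 0 by decide)]

lemma pd0_toX (q : Polynomial ℂ) : pderiv 0 (toX q : Poly2 ℂ) = toX (Polynomial.derivative q) := by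
  induction q using Polynomial.induction_on' with
  | add p q hp hq => rw [toX_add, map_add, hp, hq, map_add, toX_add]
  | monomial n c =>
    rw [Polynomial.derivative_monomial]
    simp [toX, Polynomial.aeval_monomial, pderiv_C_mul, Derivation.leibniz_pow, pderiv_X_self]
    cases n with
    | zero => simp
    | succ k =>
      simp [mul_comm, mul_assoc, mul_left_comm]


def phiH : Poly2 ℂ →ₐ[ℂ] Polynomial (Polynomial ℂ) :=
  MvPolynomial.aeval ![Polynomial.C Polynomial.X, Polynomial.X]

def psiH : Polynomial (Polynomial ℂ) →+* Poly2 ℂ :=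
  Polynomial.eval₂RingHom (Polynomial.aeval (X 0 : Poly2 ℂ)).toRingHom (X 1)

@[simp] lemma psiH_C (q : Polynomial ℂ) : psiH (Polynomial.C q) = toX q := by
  simp [psiH, toX]

@[simp] lemma psiH_X : psiH Polynomial.X = X 1 := by
  show Polynomial.eval₂ _ _ _ = _
  rw [Polynomial.eval₂_X]

lemma psi_phi (P : Poly2 ℂ) : psiH (phiH P) = P := by
  have : (psiH.comp (phiH.toRingHom)) = RingHom.id (Poly2 ℂ) := by
    apply MvPolynomial.ringHom_ext
    · intro c
      simp [phiH, toX]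
    · intro i
      fin_cases i <;> simp [phiH, toX]
  exact RingHom.congr_fun this P

lemma phiH_monomial (m : Fin 2 →₀ ℕ) (c : ℂ) :
    phiH (monomial m c) =
      Polynomial.C (Polynomial.C c * Polynomial.X ^ (m 0)) * Polynomial.X ^ (m 1) := by
  rw [monomial_eq, Finsupp.prod_fintype _ _ (fun i => pow_zero _), Fin.prod_univ_two]
  simp only [phiH, map_mul, map_pow, aeval_X, aeval_C, Matrix.cons_val_zero,
    Matrix.cons_val_one, Matrix.head_cons, Polynomial.C_mul, Polynomial.C_pow,
    MvPolynomial.algebraMap_eq]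
  rw [show (algebraMap ℂ (Polynomial (Polynomial ℂ))) c = Polynomial.C (Polynomial.C c) from rfl]
  ring

lemma phi_deg (P : Poly2 ℂ) (n : ℕ) (h : ∀ m ∈ P.support, m 1 ≤ n) :
    (phiH P).natDegree ≤ n := by
  conv_lhs => rw [P.as_sum]
  rw [map_sum]
  apply Polynomial.natDegree_sum_le_of_forall_le
  intro m hm
  rw [phiH_monomial]
  refine (Polynomial.natDegree_C_mul_le _ _).trans ?_
  rw [Polynomial.natDegree_X_pow]
  exact h m hm

lemma ydecomp (P : Poly2 ℂ) (n : ℕ) (h : ∀ m ∈ P.support, m 1 ≤ n) :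
    P = ∑ i ∈ Finset.range (n+1), toX ((phiH P).coeff i) * X 1 ^ i := by
  conv_lhs => rw [← psi_phi P,
    Polynomial.as_sum_range' _ (n+1) (Nat.lt_succ_of_le (phi_deg P n h))]
  rw [map_sum]
  refine Finset.sum_congr rfl fun i _ => ?_
  simp [psiH, Polynomial.coe_eval₂RingHom, Polynomial.eval₂_monomial, toX]


open Polynomial in
lemma rootStep {p PA PA1 PB1 : Polynomial ℂ} (hp : p ≠ 0) (hd : derivative p ≠ 0)
    (hA0 : PA ≠ 0) (E : PB1 * p = (PA + PA1 * p) * derivative p) {r : ℂ}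
    (hr : p.eval r = 0) : PA.eval r = 0 := by
  have hne : PA * derivative p ≠ 0 := mul_ne_zero hA0 hd
  have hdvd : (Polynomial.X - Polynomial.C r) ^ (rootMultiplicity r p) ∣ PA * derivative p := by
    have h2 : PA * derivative p = (PB1 - PA1 * derivative p) * p := by linear_combination -E
    rw [h2]
    exact Dvd.dvd.mul_left (pow_rootMultiplicity_dvd p r) _
  have hle : rootMultiplicity r p ≤ rootMultiplicity r (PA * derivative p) :=
    (le_rootMultiplicity_iff hne).mpr hdvd
  rw [rootMultiplicity_mul hne, derivative_rootMultiplicity_of_root hr] at hle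
  have hpos : 0 < rootMultiplicity r p := (rootMultiplicity_pos hp).mpr hr
  have hApos : 0 < rootMultiplicity r PA := by omega
  exact (rootMultiplicity_pos hA0).mp hApos

open Polynomial in
lemma three_roots_deg {p : Polynomial ℂ} (hp : p ≠ 0) {r s t : ℂ}
    (hrs : r ≠ s) (hrt : r ≠ t) (hst : s ≠ t)
    (h1 : p.eval r = 0) (h2 : p.eval s = 0) (h3 : p.eval t = 0) : 3 ≤ p.natDegree := by
  have hsub : ({r, s, t} : Finset ℂ) ⊆ p.roots.toFinset := by
    intro x hx
    simp only [Finset.mem_insert, Finset.mem_singleton] at hx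
    rw [Multiset.mem_toFinset, mem_roots hp]
    rcases hx with rfl | rfl | rfl <;> assumption
  have hcard : ({r, s, t} : Finset ℂ).card = 3 := by
    rw [Finset.card_insert_of_notMem (by simp [hrs, hrt]),
      Finset.card_insert_of_notMem (by simp [hst]), Finset.card_singleton]
  calc 3 = ({r, s, t} : Finset ℂ).card := hcard.symm
    _ ≤ p.roots.toFinset.card := Finset.card_le_card hsub
    _ ≤ Multiset.card p.roots := Multiset.toFinset_card_le _
    _ ≤ p.natDegree := p.card_roots'

open Polynomial in
lemma coreConst {p₁ p₂ PA PA1 PB1 PC1 PC2 : Polynomial ℂ}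
    (hp₁ : p₁ ≠ 0) (hp₂ : p₂ ≠ 0) (hsub : p₁ - p₂ ≠ 0)
    (hAdeg : PA.natDegree ≤ 2)
    (E₁ : PB1 * p₁ = (PA + PA1 * p₁) * derivative p₁)
    (E₂ : PB1 * p₂ = (PA + PA1 * p₂) * derivative p₂)
    (F₁ : PC1 + PC2 * p₁ = PB1 * derivative p₁)
    (F₂ : PC1 + PC2 * p₂ = PB1 * derivative p₂)
    (hd1 : derivative p₁ = 0)
    {r s t : ℂ} (hrs : r ≠ s) (hrt : r ≠ t) (hst : s ≠ t)
    (hr : p₁.eval r * p₂.eval r = 0) (hs : p₁.eval s * p₂.eval s = 0)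
    (ht : p₁.eval t * p₂.eval t = 0) :
    PA = 0 ∧ PC2 = 0 ∧ PA1 * PC1 = PB1 ^ 2 := by
  have hc1 : ∀ x : ℂ, p₁.eval x ≠ 0 := by
    intro x hx
    apply hp₁
    rw [eq_C_of_derivative_eq_zero hd1] at hx ⊢
    rw [Polynomial.eval_C] at hx
    rw [hx, map_zero]
  have hr2 : p₂.eval r = 0 := by rcases mul_eq_zero.mp hr with h | h; exact absurd h (hc1 r); exact h
  have hs2 : p₂.eval s = 0 := by rcases mul_eq_zero.mp hs with h | h; exact absurd h (hc1 s); exact h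
  have ht2 : p₂.eval t = 0 := by rcases mul_eq_zero.mp ht with h | h; exact absurd h (hc1 t); exact h
  have hd2 : derivative p₂ ≠ 0 := by
    intro h0
    apply hp₂
    rw [eq_C_of_derivative_eq_zero h0] at hr2 ⊢
    rw [Polynomial.eval_C] at hr2
    rw [hr2, map_zero]
  have hB1 : PB1 = 0 := by
    have h0 : PB1 * p₁ = 0 := by rw [E₁, hd1, mul_zero]
    exact (mul_eq_zero.mp h0).resolve_right hp₁
  have hAA : PA + PA1 * p₂ = 0 := by
    have h0 : (PA + PA1 * p₂) * derivative p₂ = 0 := by rw [← E₂, hB1, zero_mul]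
    exact (mul_eq_zero.mp h0).resolve_right hd2
  by_cases hA1 : PA1 = 0
  · have hA : PA = 0 := by simpa [hA1] using hAA
    rw [hB1] at F₁ F₂
    have hC2 : PC2 = 0 := by
      have h0 : PC2 * (p₁ - p₂) = 0 := by linear_combination F₁ - F₂
      exact (mul_eq_zero.mp h0).resolve_right hsub
    exact ⟨hA, hC2, by rw [hA1, hB1]; ring⟩
  · exfalso
    have hdeg2 : 3 ≤ p₂.natDegree := three_roots_deg hp₂ hrs hrt hst hr2 hs2 ht2
    have hPA : PA = -(PA1 * p₂) := by linear_combination hAA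
    have : PA.natDegree = PA1.natDegree + p₂.natDegree := by
      rw [hPA, natDegree_neg, natDegree_mul hA1 hp₂]
    omega

open Polynomial in
lemma core {p₁ p₂ PA PA1 PB1 PC1 PC2 : Polynomial ℂ}
    (hp₁ : p₁ ≠ 0) (hp₂ : p₂ ≠ 0) (h12 : p₁ ≠ p₂)
    (hAdeg : PA.natDegree ≤ 2)
    (E₁ : PB1 * p₁ = (PA + PA1 * p₁) * derivative p₁)
    (E₂ : PB1 * p₂ = (PA + PA1 * p₂) * derivative p₂)
    (F₁ : PC1 + PC2 * p₁ = PB1 * derivative p₁)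
    (F₂ : PC1 + PC2 * p₂ = PB1 * derivative p₂)
    {r s t : ℂ} (hrs : r ≠ s) (hrt : r ≠ t) (hst : s ≠ t)
    (hr : p₁.eval r * p₂.eval r = 0) (hs : p₁.eval s * p₂.eval s = 0)
    (ht : p₁.eval t * p₂.eval t = 0) :
    PA = 0 ∧ PC2 = 0 ∧ PA1 * PC1 = PB1 ^ 2 := by
  have hsub : p₁ - p₂ ≠ 0 := sub_ne_zero.mpr h12
  by_cases hd1 : derivative p₁ = 0
  · exact coreConst hp₁ hp₂ hsub hAdeg E₁ E₂ F₁ F₂ hd1 hrs hrt hst hr hs ht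
  by_cases hd2 : derivative p₂ = 0
  · exact coreConst hp₂ hp₁ (by intro h0; exact hsub (by linear_combination -h0)) hAdeg
      E₂ E₁ F₂ F₁ hd2 hrs hrt hst (by linear_combination hr) (by linear_combination hs)
      (by linear_combination ht)
  · have hA : PA = 0 := by
      by_contra hA0
      have key : ∀ x : ℂ, p₁.eval x * p₂.eval x = 0 → PA.eval x = 0 := by
        intro x hx
        rcases mul_eq_zero.mp hx with h | h
        · exact rootStep hp₁ hd1 hA0 E₁ h
        · exact rootStep hp₂ hd2 hA0 E₂ h
      have := three_roots_deg hA0 hrs hrt hst (key r hr) (key s hs) (key t ht)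
      omega
    rw [hA, zero_add] at E₁ E₂
    have hB1₁ : PB1 = PA1 * derivative p₁ := by
      have h0 : (PB1 - PA1 * derivative p₁) * p₁ = 0 := by linear_combination E₁
      have := (mul_eq_zero.mp h0).resolve_right hp₁
      linear_combination this
    have hB1₂ : PB1 = PA1 * derivative p₂ := by
      have h0 : (PB1 - PA1 * derivative p₂) * p₂ = 0 := by linear_combination E₂
      have := (mul_eq_zero.mp h0).resolve_right hp₂
      linear_combination this
    have hC2 : PC2 = 0 := by
      have h0 : PC2 * (p₁ - p₂) = 0 := by
        linear_combination F₁ - F₂ + derivative p₁ * hB1₂ - derivative p₂ * hB1₁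
      exact (mul_eq_zero.mp h0).resolve_right hsub
    refine ⟨hA, hC2, ?_⟩
    linear_combination PA1 * F₁ - PA1 * p₁ * hC2 - PB1 * hB1₁


lemma sig_monomial (p : Polynomial ℂ) (m : Fin 2 →₀ ℕ) (c : ℂ) :
    sig p (monomial m c) = Polynomial.C c * Polynomial.X ^ (m 0) * p ^ (m 1) := by
  rw [monomial_eq, Finsupp.prod_fintype _ _ (fun i => pow_zero _), Fin.prod_univ_two]
  simp only [sig, map_mul, map_pow, aeval_X, aeval_C, Matrix.cons_val_zero,
    Matrix.cons_val_one, Matrix.head_cons, MvPolynomial.algebraMap_eq]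
  rw [show ((algebraMap ℂ (Polynomial ℂ)) c) = Polynomial.C c from rfl]
  ring

lemma sig0_deg (P : Poly2 ℂ) (n : ℕ) (h : ∀ m ∈ P.support, m 0 ≤ n) :
    (sig 0 P).natDegree ≤ n := by
  conv_lhs => rw [P.as_sum]
  rw [map_sum]
  apply Polynomial.natDegree_sum_le_of_forall_le
  intro m hm
  rw [sig_monomial]
  rcases Nat.eq_zero_or_pos (m 1) with h1 | h1
  · rw [h1, pow_zero, mul_one]
    refine (Polynomial.natDegree_C_mul_le _ _).trans ?_
    rw [Polynomial.natDegree_X_pow]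
    exact h m hm
  · rw [zero_pow (Nat.pos_iff_ne_zero.mp h1), mul_zero, Polynomial.natDegree_zero]
    exact Nat.zero_le n

@[simp] lemma toX_sub (q r : Polynomial ℂ) : toX (q - r) = toX q - toX r := by
  simp [toX]

@[simp] lemma toX_pow (q : Polynomial ℂ) (n : ℕ) : toX (q ^ n) = toX q ^ n := by
  simp [toX]

end AMTR

set_option maxHeartbeats 2000000 in
open AMTR in
/-- Lemma 5.6: let `(g,Γ)` be a solution of the `(1,2)`-AlgDOP problem over `ℂ`
with `Γ = y(y−p₁(x))(y−p₂(x))`, such that no `(1,2)`-admissible change of variables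
(and nonzero constant rescaling of `g`) turns it into a solution of the
`(1,1)`-AlgDOP problem. Then `p₁·p₂` has at most two distinct complex roots. -/
theorem at_most_two_roots (a b c : Poly2 ℂ) (p₁ p₂ : Polynomial ℂ)
    (Γ : Poly2 ℂ)
    (hΓ : Γ = X 1 * (X 1 - toX p₁) * (X 1 - toX p₂))
    (h : IsAlgDOP 1 2 a b c Γ)
    (hnot : ¬ ∃ (α β γ : ℂ) (p : Polynomial ℂ) (lam : ℂ),
        α ≠ 0 ∧ γ ≠ 0 ∧ p.natDegree ≤ 2 ∧ lam ≠ 0 ∧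
        IsAlgDOP 1 1 (C lam * pushA α β γ p a) (C lam * pushB α β γ p a b)
          (C lam * pushC α β γ p a b c) (phiInv α β γ p Γ)) :
    (p₁ * p₂).roots.toFinset.card ≤ 2 := by
  obtain ⟨hwa, hwb, hwc, hΔ, hsf, -, hdvd1, hdvd2⟩ := h
  -- nonvanishing facts from squarefreeness
  have hp₁ : p₁ ≠ 0 := by
    rintro rfl
    have hu : IsUnit (X 1 : Poly2 ℂ) :=
      hsf (X 1) ⟨X 1 - toX p₂, by rw [hΓ, toX_zero]; ring⟩
    have := hu.map (sig 0)
    rw [sig_X1] at this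
    exact not_isUnit_zero this
  have hp₂ : p₂ ≠ 0 := by
    rintro rfl
    have hu : IsUnit (X 1 : Poly2 ℂ) :=
      hsf (X 1) ⟨X 1 - toX p₁, by rw [hΓ, toX_zero]; ring⟩
    have := hu.map (sig 0)
    rw [sig_X1] at this
    exact not_isUnit_zero this
  have hp12 : p₁ ≠ p₂ := by
    rintro rfl
    have hu : IsUnit (X 1 - toX p₁ : Poly2 ℂ) :=
      hsf (X 1 - toX p₁) ⟨X 1, by rw [hΓ]; ring⟩
    have := hu.map (sig p₁)
    rw [map_sub, sig_X1, sig_toX, sub_self] at this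
    exact not_isUnit_zero this
  have hsub12 : p₁ - p₂ ≠ 0 := sub_ne_zero.mpr hp12
  have hsub21 : p₂ - p₁ ≠ 0 := sub_ne_zero.mpr (Ne.symm hp12)
  -- decompositions
  have hya : ∀ m ∈ a.support, m 1 ≤ 1 := by
    intro m hm
    have h2 := hwa m hm
    norm_num at h2
    by_contra hcc
    push_neg at hcc
    have hc3 : (2:ℝ) ≤ (m 1 : ℝ) := by exact_mod_cast hcc
    have h0 : (0:ℝ) ≤ (m 0 : ℝ) := Nat.cast_nonneg _
    linarith
  have hyb : ∀ m ∈ b.support, m 1 ≤ 1 := by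
    intro m hm
    have h2 := hwb m hm
    norm_num at h2
    by_contra hcc
    push_neg at hcc
    have hc3 : (2:ℝ) ≤ (m 1 : ℝ) := by exact_mod_cast hcc
    have h0 : (0:ℝ) ≤ (m 0 : ℝ) := Nat.cast_nonneg _
    linarith
  have hyc : ∀ m ∈ c.support, m 1 ≤ 2 := by
    intro m hm
    have h2 := hwc m hm
    norm_num at h2
    by_contra hcc
    push_neg at hcc
    have hc3 : (3:ℝ) ≤ (m 1 : ℝ) := by exact_mod_cast hcc
    have h0 : (0:ℝ) ≤ (m 0 : ℝ) := Nat.cast_nonneg _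
    linarith
  set PA := (phiH a).coeff 0
  set PA1 := (phiH a).coeff 1
  set PB := (phiH b).coeff 0
  set PB1 := (phiH b).coeff 1
  set PC0 := (phiH c).coeff 0
  set PC1 := (phiH c).coeff 1
  set PC2 := (phiH c).coeff 2
  have ha : a = toX PA + toX PA1 * X 1 := by
    have := ydecomp a 1 hya
    simpa [Finset.sum_range_succ] using this
  have hb : b = toX PB + toX PB1 * X 1 := by
    have := ydecomp b 1 hyb
    simpa [Finset.sum_range_succ] using this
  have hc : c = toX PC0 + toX PC1 * X 1 + toX PC2 * X 1 ^ 2 := by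
    have := ydecomp c 2 hyc
    simpa [Finset.sum_range_succ] using this
  -- degree bound on PA
  have hAdeg : PA.natDegree ≤ 2 := by
    have hxa : ∀ m ∈ a.support, m 0 ≤ 2 := by
      intro m hm
      have h2 := hwa m hm
      norm_num at h2
      by_contra hcc
      push_neg at hcc
      have hc3 : (3:ℝ) ≤ (m 0 : ℝ) := by exact_mod_cast hcc
      have h1 : (0:ℝ) ≤ (m 1 : ℝ) := Nat.cast_nonneg _
      linarith
    have h0 : sig 0 a = PA := by
      rw [ha]
      simp
    rw [← h0]
    exact sig0_deg a 2 hxa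
  -- derivative facts on pderiv of X 1
  have pd01 : pderiv (0 : Fin 2) (X 1 : Poly2 ℂ) = 0 := pderiv_X_of_ne (by decide)
  have pd11 : pderiv (1 : Fin 2) (X 1 : Poly2 ℂ) = 1 := pderiv_X_self 1
  -- evaluation of Γ at y = q
  have hsigΓ : ∀ q : Polynomial ℂ, sig q Γ = q * (q - p₁) * (q - p₂) := by
    intro q
    rw [hΓ]
    simp
  -- extracting identities from the first invariance condition
  have ident1 : ∀ q : Polynomial ℂ, sig q Γ = 0 →
      (PA + PA1 * q) * (-(q * Polynomial.derivative p₁ * (q - p₂))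
          - q * (q - p₁) * Polynomial.derivative p₂)
        + (PB + PB1 * q) * (((q - p₁) + q) * (q - p₂) + q * (q - p₁)) = 0 := by
    intro q hq
    have hd : sig q Γ ∣ sig q (a * pderiv 0 Γ + b * pderiv 1 Γ) := map_dvd _ hdvd1
    rw [hq, zero_dvd_iff] at hd
    rw [hΓ, ha, hb] at hd
    simp only [map_add, map_mul, map_sub, pderiv_mul, pd0_toX, pd1_toX, pd01, pd11,
      sig_X1, sig_toX, map_sub, map_add, map_mul, zero_mul, mul_zero, zero_sub, sub_zero,
      mul_one, one_mul, add_zero, zero_add, map_neg, map_zero] at hd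
    linear_combination hd
  have ident2 : ∀ q : Polynomial ℂ, sig q Γ = 0 →
      (PB + PB1 * q) * (-(q * Polynomial.derivative p₁ * (q - p₂))
          - q * (q - p₁) * Polynomial.derivative p₂)
        + (PC0 + PC1 * q + PC2 * q ^ 2) * (((q - p₁) + q) * (q - p₂) + q * (q - p₁)) = 0 := by
    intro q hq
    have hd : sig q Γ ∣ sig q (b * pderiv 0 Γ + c * pderiv 1 Γ) := map_dvd _ hdvd2
    rw [hq, zero_dvd_iff] at hd
    rw [hΓ, hb, hc] at hd
    simp only [map_add, map_mul, map_sub, map_pow, pderiv_mul, pd0_toX, pd1_toX, pd01, pd11,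
      sig_X1, sig_toX, zero_mul, mul_zero, zero_sub, sub_zero,
      mul_one, one_mul, add_zero, zero_add, map_neg, map_zero] at hd
    linear_combination hd
  have hΓ0 : sig 0 Γ = 0 := by rw [hsigΓ]; ring
  have hΓ1 : sig p₁ Γ = 0 := by rw [hsigΓ]; ring
  have hΓ2 : sig p₂ Γ = 0 := by rw [hsigΓ]; ring
  -- B = 0 and C0 = 0
  have hPB0 : PB = 0 := by
    have h0 := ident1 0 hΓ0
    have h1 : PB * (p₁ * p₂) = 0 := by linear_combination h0
    exact ((mul_eq_zero.mp h1).resolve_right (mul_ne_zero hp₁ hp₂))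
  have hPC00 : PC0 = 0 := by
    have h0 := ident2 0 hΓ0
    have h1 : PC0 * (p₁ * p₂) = 0 := by linear_combination h0
    exact ((mul_eq_zero.mp h1).resolve_right (mul_ne_zero hp₁ hp₂))
  -- the E and F identities
  have E₁ : PB1 * p₁ = (PA + PA1 * p₁) * Polynomial.derivative p₁ := by
    have h0 := ident1 p₁ hΓ1
    have h1 : ((PB + PB1 * p₁) - (PA + PA1 * p₁) * Polynomial.derivative p₁)
        * (p₁ * (p₁ - p₂)) = 0 := by linear_combination h0
    have h2 := (mul_eq_zero.mp h1).resolve_right (mul_ne_zero hp₁ hsub12)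
    linear_combination h2 - hPB0
  have E₂ : PB1 * p₂ = (PA + PA1 * p₂) * Polynomial.derivative p₂ := by
    have h0 := ident1 p₂ hΓ2
    have h1 : ((PB + PB1 * p₂) - (PA + PA1 * p₂) * Polynomial.derivative p₂)
        * (p₂ * (p₂ - p₁)) = 0 := by linear_combination h0
    have h2 := (mul_eq_zero.mp h1).resolve_right (mul_ne_zero hp₂ hsub21)
    linear_combination h2 - hPB0
  have F₁ : PC1 + PC2 * p₁ = PB1 * Polynomial.derivative p₁ := by
    have h0 := ident2 p₁ hΓ1
    have h1 : ((PC0 + PC1 * p₁ + PC2 * p₁ ^ 2) - (PB + PB1 * p₁) * Polynomial.derivative p₁)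
        * (p₁ * (p₁ - p₂)) = 0 := by linear_combination h0
    have h2 := (mul_eq_zero.mp h1).resolve_right (mul_ne_zero hp₁ hsub12)
    have h3 : ((PC1 + PC2 * p₁) - PB1 * Polynomial.derivative p₁) * p₁ = 0 := by
      linear_combination h2 - hPC00 + Polynomial.derivative p₁ * hPB0
    have h4 := (mul_eq_zero.mp h3).resolve_right hp₁
    linear_combination h4
  have F₂ : PC1 + PC2 * p₂ = PB1 * Polynomial.derivative p₂ := by
    have h0 := ident2 p₂ hΓ2
    have h1 : ((PC0 + PC1 * p₂ + PC2 * p₂ ^ 2) - (PB + PB1 * p₂) * Polynomial.derivative p₂)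
        * (p₂ * (p₂ - p₁)) = 0 := by linear_combination h0
    have h2 := (mul_eq_zero.mp h1).resolve_right (mul_ne_zero hp₂ hsub21)
    have h3 : ((PC1 + PC2 * p₂) - PB1 * Polynomial.derivative p₂) * p₂ = 0 := by
      linear_combination h2 - hPC00 + Polynomial.derivative p₂ * hPB0
    have h4 := (mul_eq_zero.mp h3).resolve_right hp₂
    linear_combination h4
  -- conclusion by contradiction
  by_contra hcard
  push_neg at hcard
  obtain ⟨r, s, t, hrm, hsm, htm, hrs, hrt, hst⟩ := Finset.two_lt_card_iff.mp hcard
  have hmem : ∀ x ∈ (p₁ * p₂).roots.toFinset, p₁.eval x * p₂.eval x = 0 := by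
    intro x hx
    rw [Multiset.mem_toFinset, Polynomial.mem_roots (mul_ne_zero hp₁ hp₂)] at hx
    rwa [Polynomial.IsRoot, Polynomial.eval_mul] at hx
  obtain ⟨hA, hC2, hAC⟩ := core hp₁ hp₂ hp12 hAdeg E₁ E₂ F₁ F₂ hrs hrt hst
    (hmem r hrm) (hmem s hsm) (hmem t htm)
  apply hΔ
  have hz : a * c - b ^ 2 = toX (PA1 * PC1 - PB1 ^ 2) * X 1 ^ 2 := by
    rw [ha, hb, hc, hA, hPB0, hPC00, hC2]
    simp only [toX_sub, toX_mul, toX_pow, toX_zero]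
    ring
  rw [hAC, sub_self, toX_zero, zero_mul] at hz
  exact hz
end
end

section
/- Let a = y + 8x − 9x², b = 5(4y − 3xy − x²), c = −25(y² − 4xy + 3x³), and Γ = y³ − 20xy² + 16y² + 45x³y − 40x²y − 27x⁵ + 25x⁴ in ℝ[x,y]. Then: (1) ac − b² = −25·Γ; (2) Γ is irreducible in ℂ[x,y]; and (3) the pair ([[a,b],[b,c]], Γ) is a solution of the (1,2)-AlgDOP problem over ℝ (in particular Γ divides a·∂ₓΓ + b·∂_yΓ and Γ divides b·∂ₓΓ + c·∂_yΓ). -/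
open MvPolynomial

noncomputable section

namespace DodecAux

lemma noRoot {K : Type*} [Field K] [CharZero K] (p : Polynomial K)
    (h : p ^ 3 - 20 * Polynomial.X * p ^ 2 + 16 * p ^ 2 + 45 * Polynomial.X ^ 3 * p
      - 40 * Polynomial.X ^ 2 * p - 27 * Polynomial.X ^ 5 + 25 * Polynomial.X ^ 4 = 0) :
    False := by
  by_cases hd : p.natDegree ≤ 1
  · have h5 : (p ^ 3 - 20 * Polynomial.X * p ^ 2 + 16 * p ^ 2 + 45 * Polynomial.X ^ 3 * p
      - 40 * Polynomial.X ^ 2 * p - 27 * Polynomial.X ^ 5 + 25 * Polynomial.X ^ 4).coeff 5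
        = -27 := by
      compute_degree
      · repeat rw [if_neg (by omega)]
        norm_num
      all_goals omega
    rw [h, Polynomial.coeff_zero] at h5
    norm_num at h5
  · push_neg at hd
    have hp0 : p ≠ 0 := by
      intro h0; rw [h0, Polynomial.natDegree_zero] at hd; omega
    have h3 : (p ^ 3 - 20 * Polynomial.X * p ^ 2 + 16 * p ^ 2 + 45 * Polynomial.X ^ 3 * p
      - 40 * Polynomial.X ^ 2 * p - 27 * Polynomial.X ^ 5 + 25 * Polynomial.X ^ 4).coeff
        (3 * p.natDegree) = p.leadingCoeff ^ 3 := by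
      compute_degree
      · repeat rw [if_neg (by omega)]
        ring
      all_goals omega
    rw [h, Polynomial.coeff_zero] at h3
    exact hp0 (Polynomial.leadingCoeff_eq_zero.1 (pow_eq_zero_iff (by norm_num) |>.1 h3.symm))

/-- The dodecahedral `Γ`, over an arbitrary field. -/
def gammaPat (K : Type*) [Field K] : Poly2 K :=
  X 1 ^ 3 - 20 * X 0 * X 1 ^ 2 + 16 * X 1 ^ 2
    + 45 * X 0 ^ 3 * X 1 - 40 * X 0 ^ 2 * X 1 - 27 * X 0 ^ 5 + 25 * X 0 ^ 4

/-- `Γ` viewed as a cubic in `y` over `K[x]`. -/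
def qPat (K : Type*) [Field K] : Polynomial (Polynomial K) :=
  Polynomial.X ^ 3 - Polynomial.C (20 * Polynomial.X) * Polynomial.X ^ 2
    + Polynomial.C 16 * Polynomial.X ^ 2
    + Polynomial.C (45 * Polynomial.X ^ 3 - 40 * Polynomial.X ^ 2) * Polynomial.X
    + Polynomial.C (25 * Polynomial.X ^ 4 - 27 * Polynomial.X ^ 5)

lemma qPat_monic (K : Type*) [Field K] : (qPat K).Monic := by unfold qPat; monicity!

lemma qPat_natDegree (K : Type*) [Field K] : (qPat K).natDegree = 3 := by
  unfold qPat; compute_degree!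

lemma qPat_irreducible (K : Type*) [Field K] [CharZero K] : Irreducible (qPat K) := by
  rw [(qPat_monic K).irreducible_iff_roots_eq_zero_of_degree_le_three
    (by norm_num [qPat_natDegree]) (by norm_num [qPat_natDegree])]
  rw [Multiset.eq_zero_iff_forall_notMem]
  intro p hp
  rw [Polynomial.mem_roots'] at hp
  obtain ⟨-, hroot⟩ := hp
  rw [Polynomial.IsRoot, qPat] at hroot
  simp only [Polynomial.eval_add, Polynomial.eval_sub, Polynomial.eval_mul, Polynomial.eval_pow, Polynomial.eval_C, Polynomial.eval_X] at hroot
  exact noRoot p (by linear_combination hroot)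

/-- The change-of-variable algebra isomorphism `K[x,y] ≃ (K[x])[y]`. -/
def e1 (K : Type*) [Field K] : MvPolynomial (Fin 1) K ≃ₐ[K] Polynomial K :=
  (finSuccEquiv K 0).trans (Polynomial.mapAlgEquiv (isEmptyAlgEquiv K (Fin 0)))

def E (K : Type*) [Field K] : Poly2 K ≃ₐ[K] Polynomial (Polynomial K) :=
  (renameEquiv K (Equiv.swap 0 1)).trans
    ((finSuccEquiv K 1).trans (Polynomial.mapAlgEquiv (e1 K)))

lemma E_gammaPat (K : Type*) [Field K] : E K (gammaPat K) = qPat K := by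
  have hX1 : finSuccEquiv K 1 (X 1) = Polynomial.C (X 0) := by
    have := finSuccEquiv_X_succ (R := K) (n := 1) (j := 0)
    simpa using this
  have hX0 : e1 K (X 0) = Polynomial.X := by
    simp [e1, finSuccEquiv_X_zero]
  simp only [gammaPat, E, qPat, AlgEquiv.trans_apply, map_add, map_sub, map_mul, map_pow,
    map_ofNat, renameEquiv_apply, rename_X, Equiv.swap_apply_left, Equiv.swap_apply_right,
    finSuccEquiv_X_zero, hX1, Polynomial.coe_mapAlgEquiv, Polynomial.map_add, Polynomial.map_sub,
    Polynomial.map_mul, Polynomial.map_pow, Polynomial.map_ofNat, Polynomial.map_X,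
    Polynomial.map_C, RingHom.coe_coe, hX0]
  ring

lemma gammaPat_irreducible (K : Type*) [Field K] [CharZero K] : Irreducible (gammaPat K) := by
  have h := qPat_irreducible K
  rw [← E_gammaPat K] at h
  exact (MulEquiv.irreducible_iff (E K)).mp h

end DodecAux

/-- The dodecahedral-quotient model (B1): with
`a = y + 8x − 9x²`, `b = 5(4y − 3xy − x²)`, `c = −25(y² − 4xy + 3x³)` and
`Γ = y³ − 20xy² + 16y² + 45x³y − 40x²y − 27x⁵ + 25x⁴` in `ℝ[x,y]`, one has
`ac − b² = −25Γ`, `Γ` is irreducible in `ℂ[x,y]`, and `([[a,b],[b,c]], Γ)` is a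
solution of the `(1,2)`-AlgDOP problem over `ℝ`. -/
theorem dodecahedral_model :
    let a : Poly2 ℝ := X 1 + 8 * X 0 - 9 * X 0 ^ 2
    let b : Poly2 ℝ := 5 * (4 * X 1 - 3 * X 0 * X 1 - X 0 ^ 2)
    let c : Poly2 ℝ := -25 * (X 1 ^ 2 - 4 * X 0 * X 1 + 3 * X 0 ^ 3)
    let Γ : Poly2 ℝ := X 1 ^ 3 - 20 * X 0 * X 1 ^ 2 + 16 * X 1 ^ 2
        + 45 * X 0 ^ 3 * X 1 - 40 * X 0 ^ 2 * X 1 - 27 * X 0 ^ 5 + 25 * X 0 ^ 4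
    a * c - b ^ 2 = -25 * Γ ∧
    Irreducible (MvPolynomial.map (algebraMap ℝ ℂ) Γ) ∧
    IsAlgDOP 1 2 a b c Γ := by
  intro a b c Γ
  have hΓ : Γ = DodecAux.gammaPat ℝ := rfl
  have hirr : Irreducible Γ := hΓ ▸ DodecAux.gammaPat_irreducible ℝ
  have h25 : (-25 : Poly2 ℝ) ≠ 0 := by
    intro h
    have := congrArg constantCoeff h
    simp only [map_neg, map_ofNat, map_zero] at this
    norm_num at this
  have hfact : a * c - b ^ 2 = -25 * Γ := by unfold a b c Γ; ring
  refine ⟨hfact, ?_, ?_, ?_, ?_, ?_, ?_, ?_, ?_, ?_⟩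
  · -- irreducibility over ℂ
    have hmap : MvPolynomial.map (algebraMap ℝ ℂ) Γ = DodecAux.gammaPat ℂ := by
      unfold Γ
      simp only [DodecAux.gammaPat, map_add, map_sub, map_mul, map_pow, map_ofNat,
        MvPolynomial.map_X]
    rw [hmap]
    exact DodecAux.gammaPat_irreducible ℂ
  · -- WDegLE a
    have hrep : a = monomial (Finsupp.single 1 1) 1 + monomial (Finsupp.single 0 1) 8
        + monomial (Finsupp.single 0 2) (-9) := by
      simp only [monomial_eq, Finsupp.prod_single_index, pow_zero, pow_one, map_ofNat, map_neg,
        map_one]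
      unfold a; ring
    intro m hm
    by_contra hD
    push_neg at hD
    rw [mem_support_iff] at hm
    apply hm
    rw [hrep, coeff_add, coeff_add, coeff_monomial, coeff_monomial, coeff_monomial]
    rw [if_neg, if_neg, if_neg]
    · ring
    all_goals rintro rfl
    all_goals simp [Finsupp.single_apply, Finsupp.add_apply] at hD
    all_goals norm_num at hD
  · -- WDegLE b
    have hrep : b = monomial (Finsupp.single 1 1) 20
        + monomial (Finsupp.single 0 1 + Finsupp.single 1 1) (-15)
        + monomial (Finsupp.single 0 2) (-5) := by
      rw [monomial_single_add]
      simp only [monomial_eq, Finsupp.prod_single_index, pow_zero, pow_one, map_ofNat, map_neg,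
        map_one]
      unfold b; ring
    intro m hm
    by_contra hD
    push_neg at hD
    rw [mem_support_iff] at hm
    apply hm
    rw [hrep, coeff_add, coeff_add, coeff_monomial, coeff_monomial, coeff_monomial]
    rw [if_neg, if_neg, if_neg]
    · ring
    all_goals rintro rfl
    all_goals simp [Finsupp.single_apply, Finsupp.add_apply] at hD
    all_goals norm_num at hD
  · -- WDegLE c
    have hrep : c = monomial (Finsupp.single 1 2) (-25)
        + monomial (Finsupp.single 0 1 + Finsupp.single 1 1) 100
        + monomial (Finsupp.single 0 3) (-75) := by
      rw [monomial_single_add]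
      simp only [monomial_eq, Finsupp.prod_single_index, pow_zero, pow_one, map_ofNat, map_neg,
        map_one]
      unfold c; ring
    intro m hm
    by_contra hD
    push_neg at hD
    rw [mem_support_iff] at hm
    apply hm
    rw [hrep, coeff_add, coeff_add, coeff_monomial, coeff_monomial, coeff_monomial]
    rw [if_neg, if_neg, if_neg]
    · ring
    all_goals rintro rfl
    all_goals simp [Finsupp.single_apply, Finsupp.add_apply] at hD
    all_goals norm_num at hD
  · -- nonvanishing
    rw [hfact]
    exact mul_ne_zero h25 hirr.ne_zero
  · exact hirr.squarefree
  · rw [dvd_def]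
    exact Exists.intro (-25 : Poly2 ℝ) (by rw [hfact]; ring)
  · -- first divisibility
    rw [dvd_def]
    refine Exists.intro (40 - 45 * X 0 : Poly2 ℝ) ?_
    have h0 : (1 : Fin 2) ≠ 0 := by decide
    have h1 : (0 : Fin 2) ≠ 1 := by decide
    have hC : Γ = X 1 * X 1 * X 1 - C 20 * X 0 * (X 1 * X 1) + C 16 * (X 1 * X 1)
        + C 45 * (X 0 * X 0 * X 0) * X 1 - C 40 * (X 0 * X 0) * X 1
        - C 27 * (X 0 * X 0 * X 0 * X 0 * X 0) + C 25 * (X 0 * X 0 * X 0 * X 0) := by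
      simp only [map_ofNat]; unfold Γ; ring
    rw [hC]
    simp only [map_add, map_sub, pderiv_mul, pderiv_X_self, pderiv_X_of_ne h0, pderiv_X_of_ne h1,
      pderiv_C, mul_zero, zero_mul, mul_one, one_mul, add_zero, zero_add, sub_zero, zero_sub]
    simp only [map_ofNat]
    unfold a b
    ring
  · -- second divisibility
    rw [dvd_def]
    refine Exists.intro (100 * X 0 - 75 * X 1 : Poly2 ℝ) ?_
    have h0 : (1 : Fin 2) ≠ 0 := by decide
    have h1 : (0 : Fin 2) ≠ 1 := by decide
    have hC : Γ = X 1 * X 1 * X 1 - C 20 * X 0 * (X 1 * X 1) + C 16 * (X 1 * X 1)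
        + C 45 * (X 0 * X 0 * X 0) * X 1 - C 40 * (X 0 * X 0) * X 1
        - C 27 * (X 0 * X 0 * X 0 * X 0 * X 0) + C 25 * (X 0 * X 0 * X 0 * X 0) := by
      simp only [map_ofNat]; unfold Γ; ring
    rw [hC]
    simp only [map_add, map_sub, pderiv_mul, pderiv_X_self, pderiv_X_of_ne h0, pderiv_X_of_ne h1,
      pderiv_C, mul_zero, zero_mul, mul_one, one_mul, add_zero, zero_add, sub_zero, zero_sub]
    simp only [map_ofNat]
    unfold b c
    ring
end
end
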